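/- arXiv:1812.11380 — 2 statements merged into one kernel-verified Lean document; each statement's English description precedes it below -/
import Mathlib

section
/- Let (a,b) be a triclinic pair of real symmetric 3×3 matrices such that a is orthotropic. Then the six matrices Id, a, b, a², (ab)ˢ = ab + ba, and [a,b]² = (ab − ba)² form a basis of the 6-dimensional real vector space of symmetric 3×3 matrices. -/
open Matrix BigOperators

noncomputable section

abbrev M3 := Matrix (Fin 3) (Fin 3) ℝ

/-- `a` and `b` have no common eigenvector: the pair `(a,b)` is triclinic. -/
def Triclinic (a b : M3) : Prop :=
  ¬ ∃ v : Fin 3 → ℝ, v ≠ 0 ∧ (∃ μ : ℝ, a.mulVec v = μ • v) ∧ (∃ ν : ℝ, b.mulVec v = ν • v)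

/-- `a` has three pairwise distinct eigenvalues. -/
def Orthotropic (a : M3) : Prop :=
  ∃ l1 l2 l3 : ℝ, l1 ≠ l2 ∧ l1 ≠ l3 ∧ l2 ≠ l3 ∧
    (∃ v : Fin 3 → ℝ, v ≠ 0 ∧ a.mulVec v = l1 • v) ∧
    (∃ v : Fin 3 → ℝ, v ≠ 0 ∧ a.mulVec v = l2 • v) ∧
    (∃ v : Fin 3 → ℝ, v ≠ 0 ∧ a.mulVec v = l3 • v)

/-!
Conjugation by an orthonormal eigenbasis of `a` is a ⋆-algebra automorphism of the 3×3 matrices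
preserving triclinicity and orthotropy, so we may assume `a = diagonal d` with the `d i` distinct.
For a vanishing combination `c₀ + c₁a + c₂b + c₃a² + c₄(ab + ba) + c₅[a,b]²`, the off-diagonal
entries form a 3×3 system in `c₂, c₄, c₅` with determinant
`(d₀ - d₁)(d₀ - d₂)(d₁ - d₂)((b₀₁b₀₂)² + (b₀₁b₁₂)² + (b₀₂b₁₂)²)`. This is nonzero since two
vanishing off-diagonal entries of `b` would make a standard basis vector a common eigenvector.
The diagonal entries then give a Vandermonde system for `c₀, c₁, c₃`. Six independent symmetric
matrices span the symmetric matrices, whose dimension is at most the number of entries on or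
above the diagonal.
-/

open Unitary

namespace Matrix

variable {n R : Type*}

variable (n R) in
def symmetricSubmodule [CommSemiring R] : Submodule R (Matrix n n R) where
  carrier := {m | m.IsSymm}
  add_mem' := IsSymm.add
  zero_mem' := isSymm_zero
  smul_mem' c _ h := h.smul c

variable [Fintype n]

section Field

variable [LinearOrder n] [Field R]

theorem finrank_symmetricSubmodule_le :
    Module.finrank R (symmetricSubmodule n R) ≤ Fintype.card {p : n × n // p.1 ≤ p.2} := by
  let upperEntries : symmetricSubmodule n R →ₗ[R] {p : n × n // p.1 ≤ p.2} → R :=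
    (LinearMap.pi fun p => entryLinearMap R R p.1.1 p.1.2) ∘ₗ (symmetricSubmodule n R).subtype
  refine (LinearMap.finrank_le_finrank_of_injective (f := upperEntries) ?_).trans
    (Module.finrank_fintype_fun_eq_card R).le
  rw [← LinearMap.ker_eq_bot, LinearMap.ker_eq_bot']
  rintro ⟨m, hm⟩ h
  ext i j
  change m i j = 0
  rcases le_total i j with hij | hji
  · exact congr_fun h ⟨(i, j), hij⟩
  · rw [← hm.apply i j]
    exact congr_fun h ⟨(j, i), hji⟩

theorem span_eq_symmetricSubmodule {ι : Type*} [Fintype ι] {f : ι → Matrix n n R}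
    (hf : LinearIndependent R f) (hsymm : ∀ i, (f i).IsSymm)
    (hcard : Fintype.card {p : n × n // p.1 ≤ p.2} ≤ Fintype.card ι) :
    Submodule.span R (Set.range f) = symmetricSubmodule n R :=
  Submodule.eq_of_le_of_finrank_le (Submodule.span_le.2 <| Set.range_subset_iff.2 hsymm)
    (finrank_symmetricSubmodule_le.trans <| hcard.trans (finrank_span_eq_card hf).ge)

end Field

variable [DecidableEq n]

section Diagonal

variable [CommRing R] (d : n → R) (b : Matrix n n R)

theorem diagonal_mul_add_mul_diagonal_apply (i j : n) :
    (diagonal d * b + b * diagonal d) i j = (d i + d j) * b i j := by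
  simp only [add_apply, diagonal_mul, mul_diagonal]
  ring

theorem diagonal_mul_sub_mul_diagonal_apply (i j : n) :
    (diagonal d * b - b * diagonal d) i j = (d i - d j) * b i j := by
  simp only [sub_apply, diagonal_mul, mul_diagonal]
  ring

end Diagonal

section Unitary

variable [CommRing R] [StarRing R]

theorem conjStarAlgAut_mulVec_mulVec (u : unitary (Matrix n n R)) (x : Matrix n n R)
    (v : n → R) : conjStarAlgAut R _ u x *ᵥ (u *ᵥ v) = (u : Matrix n n R) *ᵥ (x *ᵥ v) := by
  simp [mulVec_mulVec, Matrix.mul_assoc]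

theorem unitary_mulVec_ne_zero (u : unitary (Matrix n n R)) {v : n → R} (hv : v ≠ 0) :
    (u : Matrix n n R) *ᵥ v ≠ 0 := by
  intro h
  apply hv
  simpa [mulVec_mulVec] using congr_arg (star (u : Matrix n n R) *ᵥ ·) h

end Unitary

end Matrix

def pairFamily {A : Type*} [Ring A] (a b : A) : Fin 6 → A :=
  ![1, a, b, a ^ 2, a * b + b * a, (a * b - b * a) ^ 2]

theorem map_comp_pairFamily {A B F : Type*} [Ring A] [Ring B] [FunLike F A B]
    [RingHomClass F A B] (f : F) (a b : A) : f ∘ pairFamily a b = pairFamily (f a) (f b) := by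
  funext i
  fin_cases i <;> simp [pairFamily]

section PairFamily

variable {n R : Type*} [Fintype n] [DecidableEq n] [CommRing R]

theorem pairFamily_isSymm {a b : Matrix n n R} (ha : a.IsSymm) (hb : b.IsSymm) (i : Fin 6) :
    (pairFamily a b i).IsSymm := by
  fin_cases i
  · exact isSymm_one
  · exact ha
  · exact hb
  · exact ha.pow 2
  · simp [pairFamily, IsSymm, transpose_mul, ha.eq, hb.eq, add_comm]
  · change ((a * b - b * a) ^ 2)ᵀ = (a * b - b * a) ^ 2
    rw [transpose_pow, transpose_sub, transpose_mul, transpose_mul, ha.eq, hb.eq, ← neg_sub, neg_sq]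

theorem sum_smul_pairFamily_diagonal_apply (d : n → R) (b : Matrix n n R) (c : Fin 6 → R)
    (i j : n) :
    (∑ k, c k • pairFamily (diagonal d) b k) i j =
      (c 0 + c 1 * d i + c 3 * d i ^ 2) * (1 : Matrix n n R) i j +
        (c 2 + c 4 * (d i + d j)) * b i j +
        c 5 * ∑ k, (d i - d k) * b i k * ((d k - d j) * b k j) := by
  simp only [Fin.sum_univ_six, pairFamily, cons_val, diagonal_pow, Matrix.add_apply,
    Matrix.smul_apply, smul_eq_mul, ↓diagonal_mul_add_mul_diagonal_apply, sq (_ - _), mul_apply,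
    ↓diagonal_mul_sub_mul_diagonal_apply, diagonal_apply, one_apply, Pi.pow_apply]
  split_ifs <;> ring

end PairFamily

theorem coeffs_eq_zero_of_offDiag_eq_zero {d : Fin 3 → ℝ} {b : M3} (hd : Function.Injective d)
    (hoff : (b 0 1 * b 0 2) ^ 2 + (b 0 1 * b 1 2) ^ 2 + (b 0 2 * b 1 2) ^ 2 ≠ 0) {x y z : ℝ}
    (h01 : (x + y * (d 0 + d 1)) * b 0 1 + z * ((d 0 - d 2) * b 0 2 * ((d 2 - d 1) * b 1 2)) = 0)
    (h02 : (x + y * (d 0 + d 2)) * b 0 2 + z * ((d 0 - d 1) * b 0 1 * ((d 1 - d 2) * b 1 2)) = 0)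
    (h12 : (x + y * (d 1 + d 2)) * b 1 2 + z * ((d 1 - d 0) * b 0 1 * ((d 0 - d 2) * b 0 2)) = 0) :
    ![x, y, z] = 0 := by
  let W : M3 :=
    !![b 0 1, (d 0 + d 1) * b 0 1, (d 0 - d 2) * (d 2 - d 1) * b 0 2 * b 1 2;
      b 0 2, (d 0 + d 2) * b 0 2, (d 0 - d 1) * (d 1 - d 2) * b 0 1 * b 1 2;
      b 1 2, (d 1 + d 2) * b 1 2, (d 1 - d 0) * (d 0 - d 2) * b 0 1 * b 0 2]
  have hW : W.det = (d 0 - d 1) * (d 0 - d 2) * (d 1 - d 2) *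
      ((b 0 1 * b 0 2) ^ 2 + (b 0 1 * b 1 2) ^ 2 + (b 0 2 * b 1 2) ^ 2) := by
    simp [W, det_fin_three]
    ring
  have hW0 : W.det ≠ 0 := by
    rw [hW]
    refine mul_ne_zero (mul_ne_zero (mul_ne_zero ?_ ?_) ?_) hoff <;>
      exact sub_ne_zero.2 (hd.ne (by decide))
  refine eq_zero_of_mulVec_eq_zero hW0 (funext fun i => ?_)
  fin_cases i <;> simp [W, mulVec, dotProduct, Fin.sum_univ_three]
  · linear_combination h01
  · linear_combination h02
  · linear_combination h12

theorem linearIndependent_pairFamily_diagonal {d : Fin 3 → ℝ} {b : M3}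
    (hd : Function.Injective d) (hb : b.IsSymm)
    (hoff : (b 0 1 * b 0 2) ^ 2 + (b 0 1 * b 1 2) ^ 2 + (b 0 2 * b 1 2) ^ 2 ≠ 0) :
    LinearIndependent ℝ (pairFamily (diagonal d) b) := by
  rw [Fintype.linearIndependent_iff]
  intro c hc
  have e (i j : Fin 3) :=
    (sum_smul_pairFamily_diagonal_apply d b c i j).symm.trans (congr_fun₂ hc i j)
  have h01 := e 0 1
  have h02 := e 0 2
  have h12 := e 1 2
  simp only [Fin.sum_univ_three, one_apply_ne, ne_eq, Fin.reduceEq, not_false_eq_true, sub_self,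
    zero_mul, mul_zero, zero_add, add_zero, hb.apply, Matrix.zero_apply] at h01 h02 h12
  have hoffc := coeffs_eq_zero_of_offDiag_eq_zero hd hoff h01 h02 h12
  have h2 : c 2 = 0 := congr_fun hoffc 0
  have h4 : c 4 = 0 := congr_fun hoffc 1
  have h5 : c 5 = 0 := congr_fun hoffc 2
  have hdiagc : ![c 0, c 1, c 3] = 0 := by
    refine eq_zero_of_forall_index_sum_pow_mul_eq_zero hd fun j => ?_
    have hjj := e j j
    simp only [h2, h4, h5, zero_mul, add_zero, one_apply_eq, mul_one, Matrix.zero_apply] at hjj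
    simp [Fin.sum_univ_three]
    linear_combination hjj
  intro i
  fin_cases i
  exacts [congr_fun hdiagc 0, congr_fun hdiagc 1, h2, congr_fun hdiagc 2, h4, h5]

theorem Orthotropic.conj {a : M3} (h : Orthotropic a) (u : unitary M3) :
    Orthotropic (conjStarAlgAut ℝ M3 u a) := by
  have transfer : ∀ l : ℝ, (∃ v, v ≠ 0 ∧ a *ᵥ v = l • v) →
      ∃ v, v ≠ 0 ∧ conjStarAlgAut ℝ M3 u a *ᵥ v = l • v := by
    rintro l ⟨v, hv, hav⟩
    exact ⟨_, unitary_mulVec_ne_zero u hv, by rw [conjStarAlgAut_mulVec_mulVec, hav, mulVec_smul]⟩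
  obtain ⟨l1, l2, l3, h12, h13, h23, e1, e2, e3⟩ := h
  exact ⟨l1, l2, l3, h12, h13, h23, transfer l1 e1, transfer l2 e2, transfer l3 e3⟩

theorem Triclinic.conj {a b : M3} (h : Triclinic a b) (u : unitary M3) :
    Triclinic (conjStarAlgAut ℝ M3 u a) (conjStarAlgAut ℝ M3 u b) := by
  rintro ⟨v, hv, ⟨μ, hμ⟩, ⟨ν, hν⟩⟩
  have hback (x : M3) : conjStarAlgAut ℝ M3 (star u) (conjStarAlgAut ℝ M3 u x) = x := by
    rw [← conjStarAlgAut_symm, StarAlgEquiv.symm_apply_apply]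
  refine h ⟨_, unitary_mulVec_ne_zero (star u) hv, ⟨μ, ?_⟩, ⟨ν, ?_⟩⟩
  · rw [← hback a, conjStarAlgAut_mulVec_mulVec, hμ, mulVec_smul]
  · rw [← hback b, conjStarAlgAut_mulVec_mulVec, hν, mulVec_smul]

theorem Orthotropic.injective_of_diagonal {d : Fin 3 → ℝ} (h : Orthotropic (diagonal d)) :
    Function.Injective d := by
  have mem_range : ∀ l : ℝ, (∃ v, v ≠ 0 ∧ diagonal d *ᵥ v = l • v) → ∃ i, d i = l := by
    rintro l ⟨v, hv, hdv⟩
    obtain ⟨i, hi⟩ := Function.ne_iff.1 hv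
    exact ⟨i, mul_right_cancel₀ hi (by simpa [mulVec_diagonal] using congr_fun hdv i)⟩
  obtain ⟨l1, l2, l3, h12, h13, h23, e1, e2, e3⟩ := h
  obtain ⟨i1, rfl⟩ := mem_range l1 e1
  obtain ⟨i2, rfl⟩ := mem_range l2 e2
  obtain ⟨i3, rfl⟩ := mem_range l3 e3
  have hinj : Function.Injective (d ∘ ![i1, i2, i3]) := by
    intro x y hxy
    fin_cases x <;> fin_cases y <;> simp_all [eq_comm]
  exact hinj.of_comp_right (Finite.surjective_of_injective hinj.of_comp)

theorem Triclinic.col_offDiag_ne_zero {d : Fin 3 → ℝ} {b : M3} (h : Triclinic (diagonal d) b)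
    (i : Fin 3) : ∃ j ≠ i, b j i ≠ 0 := by
  by_contra! hcol
  refine h ⟨Pi.single i 1, by simp, ⟨d i, ?_⟩, ⟨b i i, ?_⟩⟩ <;> ext j <;> by_cases hji : j = i
  all_goals simp_all

theorem Triclinic.sum_sq_offDiag_ne_zero {d : Fin 3 → ℝ} {b : M3} (h : Triclinic (diagonal d) b)
    (hb : b.IsSymm) : (b 0 1 * b 0 2) ^ 2 + (b 0 1 * b 1 2) ^ 2 + (b 0 2 * b 1 2) ^ 2 ≠ 0 := by
  intro hsum
  have hprod : b 0 1 * b 0 2 = 0 ∧ b 0 1 * b 1 2 = 0 ∧ b 0 2 * b 1 2 = 0 := by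
    refine ⟨?_, ?_, ?_⟩ <;>
      nlinarith [sq_nonneg (b 0 1 * b 0 2), sq_nonneg (b 0 1 * b 1 2), sq_nonneg (b 0 2 * b 1 2)]
  simp only [mul_eq_zero] at hprod
  obtain ⟨j0, hj0, h0⟩ := h.col_offDiag_ne_zero 0
  obtain ⟨j1, hj1, h1⟩ := h.col_offDiag_ne_zero 1
  obtain ⟨j2, hj2, h2⟩ := h.col_offDiag_ne_zero 2
  fin_cases j0 <;> fin_cases j1 <;> fin_cases j2 <;>
    simp_all [hb.apply 0 1, hb.apply 0 2, hb.apply 1 2]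

/-- For a triclinic pair `(a,b)` of symmetric matrices with `a` orthotropic, the matrices
`Id, a, b, a², ab+ba, (ab−ba)²` form a basis of the space of symmetric 3×3 matrices. -/
theorem stmt9 (a b : M3) (ha : a.IsSymm) (hb : b.IsSymm) (htri : Triclinic a b)
    (horth : Orthotropic a) :
    LinearIndependent ℝ
      (![1, a, b, a ^ 2, a * b + b * a, (a * b - b * a) ^ 2] : Fin 6 → M3) ∧
    (Submodule.span ℝ
        (Set.range (![1, a, b, a ^ 2, a * b + b * a, (a * b - b * a) ^ 2] : Fin 6 → M3))
      : Set M3) = {m : M3 | m.IsSymm} := by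
  have hA : a.IsHermitian := isHermitian_iff_isSymm.2 ha
  let Φ := conjStarAlgAut ℝ M3 (star hA.eigenvectorUnitary)
  have hΦa : Φ a = diagonal hA.eigenvalues := by
    have := hA.conjStarAlgAut_star_eigenvectorUnitary
    rwa [RCLike.ofReal_real_eq_id, Function.id_comp] at this
  have hΦb : (Φ b).IsSymm :=
    isHermitian_iff_isSymm.1 (IsSelfAdjoint.map (isHermitian_iff_isSymm.2 hb) Φ)
  have horth' : Orthotropic (diagonal hA.eigenvalues) := hΦa ▸ horth.conj _
  have htri' : Triclinic (diagonal hA.eigenvalues) (Φ b) := hΦa ▸ htri.conj _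
  have hind' : LinearIndependent ℝ (Φ ∘ pairFamily a b) := by
    rw [map_comp_pairFamily, hΦa]
    exact linearIndependent_pairFamily_diagonal horth'.injective_of_diagonal hΦb
      (htri'.sum_sq_offDiag_ne_zero hΦb)
  have hind : LinearIndependent ℝ (pairFamily a b) := .of_comp Φ.toAlgEquiv.toLinearMap hind'
  exact ⟨hind, congr_arg SetLike.coe
    (span_eq_symmetricSubmodule hind (pairFamily_isSymm ha hb) (by decide))⟩
end
end

section
/- Let (a,b) be a triclinic pair of real symmetric 3×3 matrices such that a is orthotropic. Then the deviatoric (traceless) parts of the five matrices a, b, a², (ab)ˢ = ab + ba, and [a,b]² = (ab − ba)² form a basis of the 5-dimensional real vector space of traceless symmetric 3×3 matrices. -/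
open Matrix BigOperators

noncomputable section

/-- Deviatoric (traceless) part of a 3×3 matrix. -/
def dev (m : M3) : M3 := m - (m.trace / 3) • 1

/-! Conjugation by an orthogonal matrix commutes with `dev` and with the algebra operations and
preserves triclinicity, so we may assume `a = diag(l₀, l₁, l₂)`. The coordinates
`(m₀₁, m₀₂, m₁₂, m₀₀ - m₁₁, m₁₁ - m₂₂)` vanish on multiples of the identity and are injective on
traceless symmetric matrices, so that space has dimension at most 5. In these coordinates the
five matrices form a 5×5 matrix of determinant `((l₀ - l₁)(l₁ - l₂)(l₂ - l₀))² (p²q² + p²r² + q²r²)`,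
where `p, q, r` are the off-diagonal entries of `b`. The first factor is nonzero because `a` is
orthotropic; the second vanishes only if two of `p, q, r` do, and then a standard basis vector is
a common eigenvector. -/

open Unitary

def tracelessSymmetric : Submodule ℝ M3 where
  carrier := {m | m.IsSymm ∧ m.trace = 0}
  add_mem' hx hy := ⟨hx.1.add hy.1, by rw [trace_add, hx.2, hy.2, add_zero]⟩
  zero_mem' := ⟨isSymm_zero, trace_zero _ _⟩
  smul_mem' c _ hx := ⟨hx.1.smul c, by rw [trace_smul, hx.2, smul_zero]⟩

lemma dev_mem_tracelessSymmetric {m : M3} (hm : m.IsSymm) : dev m ∈ tracelessSymmetric :=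
  ⟨hm.sub ((isSymm_one).smul _), by simp [dev, trace_smul, trace_one]⟩

def devCoord : M3 →ₗ[ℝ] Fin 5 → ℝ where
  toFun m := ![m 0 1, m 0 2, m 1 2, m 0 0 - m 1 1, m 1 1 - m 2 2]
  map_add' x y := by ext i; fin_cases i <;> simp <;> ring
  map_smul' c x := by ext i; fin_cases i <;> simp <;> ring

@[simp]
lemma devCoord_dev (m : M3) : devCoord (dev m) = devCoord m := by
  ext i; fin_cases i <;> simp [devCoord, dev]

lemma eq_zero_of_devCoord_eq_zero {m : M3} (hm : m ∈ tracelessSymmetric)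
    (h : devCoord m = 0) : m = 0 := by
  obtain ⟨hsymm, htr⟩ := hm
  have h01 : m 0 1 = 0 := congrFun h 0
  have h02 : m 0 2 = 0 := congrFun h 1
  have h12 : m 1 2 = 0 := congrFun h 2
  have h3 : m 0 0 - m 1 1 = 0 := congrFun h 3
  have h4 : m 1 1 - m 2 2 = 0 := congrFun h 4
  rw [trace_fin_three] at htr
  ext i j
  fin_cases i <;> fin_cases j <;> simp <;>
    linarith [hsymm.apply 0 1, hsymm.apply 0 2, hsymm.apply 1 2]

lemma finrank_tracelessSymmetric_le : Module.finrank ℝ tracelessSymmetric ≤ 5 := by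
  have hinj : Function.Injective (devCoord.domRestrict tracelessSymmetric) := by
    rw [← LinearMap.ker_eq_bot, LinearMap.ker_eq_bot']
    intro m hm
    exact Subtype.ext (eq_zero_of_devCoord_eq_zero m.2 hm)
  simpa using LinearMap.finrank_le_finrank_of_injective hinj

lemma span_eq_tracelessSymmetric {v : Fin 5 → M3} (hv : ∀ i, v i ∈ tracelessSymmetric)
    (hli : LinearIndependent ℝ v) : Submodule.span ℝ (Set.range v) = tracelessSymmetric := by
  refine Submodule.eq_of_le_of_finrank_le (Submodule.span_le.mpr (Set.range_subset_iff.mpr hv)) ?_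
  rw [finrank_span_eq_card hli, Fintype.card_fin]
  exact finrank_tracelessSymmetric_le

def devFamily (a b : M3) : Fin 5 → M3 :=
  ![dev a, dev b, dev (a ^ 2), dev (a * b + b * a), dev ((a * b - b * a) ^ 2)]

lemma devFamily_mem {a b : M3} (ha : a.IsSymm) (hb : b.IsSymm) (i : Fin 5) :
    devFamily a b i ∈ tracelessSymmetric := by
  have hcomm : (a * b - b * a)ᵀ = -(a * b - b * a) := by
    rw [transpose_sub, transpose_mul, transpose_mul, ha.eq, hb.eq, neg_sub]
  fin_cases i <;> refine dev_mem_tracelessSymmetric ?_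
  · exact ha
  · exact hb
  · exact ha.pow 2
  · rw [IsSymm, transpose_add, transpose_mul, transpose_mul, ha.eq, hb.eq, add_comm]
  · rw [IsSymm, transpose_pow, hcomm, neg_sq]

section conj

variable (u : unitary M3)

lemma trace_conjStarAlgAut (m : M3) : (conjStarAlgAut ℝ M3 u m).trace = m.trace := by
  rw [conjStarAlgAut_apply, trace_mul_cycle, Unitary.coe_star_mul_self, one_mul]

lemma dev_conjStarAlgAut (m : M3) :
    dev (conjStarAlgAut ℝ M3 u m) = conjStarAlgAut ℝ M3 u (dev m) := by
  rw [dev, dev, map_sub, map_smul, map_one, trace_conjStarAlgAut]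

lemma devFamily_conjStarAlgAut (a b : M3) :
    devFamily (conjStarAlgAut ℝ M3 u a) (conjStarAlgAut ℝ M3 u b) =
      conjStarAlgAut ℝ M3 u ∘ devFamily a b := by
  ext1 i
  fin_cases i <;> simp [devFamily, ← dev_conjStarAlgAut, -conjStarAlgAut_apply]

lemma conjStarAlgAut_mulVec (m : M3) (v : Fin 3 → ℝ) :
    conjStarAlgAut ℝ M3 u m *ᵥ ((u : M3) *ᵥ v) = (u : M3) *ᵥ (m *ᵥ v) := by
  rw [conjStarAlgAut_apply, mulVec_mulVec, mul_assoc, mul_assoc, Unitary.coe_star_mul_self,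
    mul_one, mulVec_mulVec]

lemma Triclinic.of_conjStarAlgAut {a b : M3}
    (h : Triclinic (conjStarAlgAut ℝ M3 u a) (conjStarAlgAut ℝ M3 u b)) : Triclinic a b := by
  rintro ⟨v, hv, ⟨μ, hμ⟩, ⟨ν, hν⟩⟩
  refine h ⟨(u : M3) *ᵥ v, ?_, ⟨μ, ?_⟩, ⟨ν, ?_⟩⟩
  · intro huv
    apply hv
    rw [← one_mulVec v, ← Unitary.coe_star_mul_self u, ← mulVec_mulVec, huv, mulVec_zero]
  · rw [conjStarAlgAut_mulVec, hμ, mulVec_smul]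
  · rw [conjStarAlgAut_mulVec, hν, mulVec_smul]

end conj

lemma mem_spectrum_of_mulVec_eq_smul {n K : Type*} [Fintype n] [DecidableEq n] [Field K]
    {A : Matrix n n K} {v : n → K} {μ : K} (hv : v ≠ 0) (h : A *ᵥ v = μ • v) :
    μ ∈ spectrum K A := by
  rw [← spectrum_toLin', ← Module.End.hasEigenvalue_iff_mem_spectrum]
  exact Module.End.hasEigenvalue_of_hasEigenvector
    ⟨Module.End.mem_eigenspace_iff.mpr (by rwa [toLin'_apply]), hv⟩

lemma injective_of_three_mem_range {α : Type*} {f : Fin 3 → α} {x y z : α}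
    (hxy : x ≠ y) (hxz : x ≠ z) (hyz : y ≠ z)
    (hx : x ∈ Set.range f) (hy : y ∈ Set.range f) (hz : z ∈ Set.range f) :
    Function.Injective f := by
  classical
  have hsub : ({x, y, z} : Finset α) ⊆ Finset.univ.image f := by
    intro w hw
    simp only [Finset.mem_insert, Finset.mem_singleton] at hw
    rcases hw with rfl | rfl | rfl <;> simpa
  have hcard : (Finset.univ.image f).card = (Finset.univ : Finset (Fin 3)).card := by
    refine le_antisymm Finset.card_image_le ?_
    simpa [Finset.card_insert_of_notMem, hxy, hxz, hyz] using Finset.card_le_card hsub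
  intro i j hij
  exact Finset.card_image_iff.mp hcard (Finset.mem_univ i) (Finset.mem_univ j) hij

lemma Orthotropic.injective_eigenvalues {a : M3} (ha : a.IsHermitian) (h : Orthotropic a) :
    Function.Injective ha.eigenvalues := by
  obtain ⟨l1, l2, l3, h12, h13, h23, ⟨v1, hv1, he1⟩, ⟨v2, hv2, he2⟩, ⟨v3, hv3, he3⟩⟩ := h
  have hmem {l : ℝ} {v : Fin 3 → ℝ} (hv : v ≠ 0) (he : a *ᵥ v = l • v) :
      l ∈ Set.range ha.eigenvalues :=
    ha.spectrum_real_eq_range_eigenvalues ▸ mem_spectrum_of_mulVec_eq_smul hv he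
  exact injective_of_three_mem_range h12 h13 h23 (hmem hv1 he1) (hmem hv2 he2) (hmem hv3 he3)

lemma not_triclinic_diagonal_of_col_eq_zero (d : Fin 3 → ℝ) {B : M3} (i : Fin 3)
    (hcol : ∀ k ≠ i, B k i = 0) : ¬ Triclinic (diagonal d) B := by
  refine not_not.mpr ⟨Pi.single i 1, by simp, ⟨d i, ?_⟩, ⟨B i i, ?_⟩⟩ <;> ext k <;>
    by_cases hk : k = i
  · subst hk; simp
  · simp [hk]
  · subst hk; simp
  · simp [hk, hcol k hk]

lemma Triclinic.sum_sq_offDiag_products_ne_zero {d : Fin 3 → ℝ} {B : M3} (hB : B.IsSymm)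
    (h : Triclinic (diagonal d) B) :
    (B 0 1 * B 0 2) ^ 2 + (B 0 1 * B 1 2) ^ 2 + (B 0 2 * B 1 2) ^ 2 ≠ 0 := by
  intro hsum
  have hpq : B 0 1 * B 0 2 = 0 := by
    nlinarith [sq_nonneg (B 0 1 * B 1 2), sq_nonneg (B 0 2 * B 1 2)]
  have hpr : B 0 1 * B 1 2 = 0 := by
    nlinarith [sq_nonneg (B 0 1 * B 0 2), sq_nonneg (B 0 2 * B 1 2)]
  have hqr : B 0 2 * B 1 2 = 0 := by
    nlinarith [sq_nonneg (B 0 1 * B 0 2), sq_nonneg (B 0 1 * B 1 2)]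
  have e10 : B 1 0 = B 0 1 := hB.apply 0 1
  have e20 : B 2 0 = B 0 2 := hB.apply 0 2
  have e21 : B 2 1 = B 1 2 := hB.apply 1 2
  rcases mul_eq_zero.mp hpq with hp | hq
  · rcases mul_eq_zero.mp hqr with hq | hr
    · exact not_triclinic_diagonal_of_col_eq_zero d 0 (by intro k hk; fin_cases k <;> simp_all) h
    · exact not_triclinic_diagonal_of_col_eq_zero d 1 (by intro k hk; fin_cases k <;> simp_all) h
  · rcases mul_eq_zero.mp hpr with hp | hr
    · exact not_triclinic_diagonal_of_col_eq_zero d 0 (by intro k hk; fin_cases k <;> simp_all) h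
    · exact not_triclinic_diagonal_of_col_eq_zero d 2 (by intro k hk; fin_cases k <;> simp_all) h

lemma det_devCoord_devFamily_diagonal (d : Fin 3 → ℝ) {B : M3} (hB : B.IsSymm) :
    (Matrix.of (devCoord ∘ devFamily (diagonal d) B)).det =
      ((d 0 - d 1) * (d 1 - d 2) * (d 2 - d 0)) ^ 2 *
        ((B 0 1 * B 0 2) ^ 2 + (B 0 1 * B 1 2) ^ 2 + (B 0 2 * B 1 2) ^ 2) := by
  have e10 : B 1 0 = B 0 1 := hB.apply 0 1
  have e20 : B 2 0 = B 0 2 := hB.apply 0 2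
  have e21 : B 2 1 = B 1 2 := hB.apply 1 2
  have hrows : devCoord ∘ devFamily (diagonal d) B = ![devCoord (diagonal d), devCoord B,
      devCoord (diagonal d ^ 2), devCoord (diagonal d * B + B * diagonal d),
      devCoord ((diagonal d * B - B * diagonal d) ^ 2)] := by
    ext1 i; fin_cases i <;> simp [devFamily]
  rw [hrows]
  simp +decide [devCoord, det_succ_row_zero, Fin.sum_univ_succ, Fin.succAbove, sq, mul_apply,
    e10, e20, e21]
  ring

lemma linearIndependent_devFamily_diagonal {d : Fin 3 → ℝ} (hd : Function.Injective d)
    {B : M3} (hB : B.IsSymm) (htri : Triclinic (diagonal d) B) :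
    LinearIndependent ℝ (devFamily (diagonal d) B) := by
  refine LinearIndependent.of_comp devCoord
    (linearIndependent_rows_of_det_ne_zero (A := .of (devCoord ∘ devFamily (diagonal d) B)) ?_)
  rw [det_devCoord_devFamily_diagonal d hB]
  have hvdm : (d 0 - d 1) * (d 1 - d 2) * (d 2 - d 0) ≠ 0 := by
    simp [sub_eq_zero, hd.ne_iff]
  exact mul_ne_zero (pow_ne_zero 2 hvdm) (htri.sum_sq_offDiag_products_ne_zero hB)

/-- For a triclinic pair `(a,b)` of symmetric matrices with `a` orthotropic, the deviatoric
parts of `a, b, a², ab+ba, (ab−ba)²` form a basis of the space of traceless symmetric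
3×3 matrices. -/
theorem stmt11 (a b : M3) (ha : a.IsSymm) (hb : b.IsSymm) (htri : Triclinic a b)
    (horth : Orthotropic a) :
    LinearIndependent ℝ
      (![dev a, dev b, dev (a ^ 2), dev (a * b + b * a),
         dev ((a * b - b * a) ^ 2)] : Fin 5 → M3) ∧
    (Submodule.span ℝ
        (Set.range (![dev a, dev b, dev (a ^ 2), dev (a * b + b * a),
          dev ((a * b - b * a) ^ 2)] : Fin 5 → M3)) : Set M3)
      = {m : M3 | m.IsSymm ∧ m.trace = 0} := by
  have haH : a.IsHermitian := isHermitian_iff_isSymm.mpr ha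
  set φ := conjStarAlgAut ℝ M3 haH.eigenvectorUnitary
  set B := φ.symm b
  have hspec : a = φ (diagonal haH.eigenvalues) := by
    simpa only [RCLike.ofReal_real_eq_id, Function.id_comp] using haH.spectral_theorem
  have hbB : b = φ B := (φ.apply_symm_apply b).symm
  have hB : B.IsSymm := isHermitian_iff_isSymm.mp <| isHermitian_iff_isSelfAdjoint.mpr <|
    (isHermitian_iff_isSelfAdjoint.mp (isHermitian_iff_isSymm.mpr hb)).map φ.symm
  have hli : LinearIndependent ℝ (devFamily a b) := by
    have hdiag := linearIndependent_devFamily_diagonal (horth.injective_eigenvalues haH) hB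
      (Triclinic.of_conjStarAlgAut _ (hspec ▸ hbB ▸ htri))
    rw [hspec, hbB, devFamily_conjStarAlgAut]
    exact hdiag.map' φ.toAlgEquiv.toLinearMap (LinearMap.ker_eq_bot.mpr φ.injective)
  exact ⟨hli, congrArg SetLike.coe (span_eq_tracelessSymmetric (devFamily_mem ha hb) hli)⟩
end
end
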